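/- Let p be a prime with p > 2 and let k be a perfect field of characteristic p. If f, g ∈ k[T] are polynomials such that the polynomial f(T^p + T^{p-1}) − g(T^{p-1}) has degree at most 1, then both f and g are constant polynomials (i.e., have degree at most 0). -/

import Mathlib

/-!
Put `u = T^p + T^(p-1)` and `v = T^(p-1)`; in characteristic `p` both have derivative
`-T^(p-2)`. Induct on `deg f`. Differentiating, `-T^(p-2) * (f'(u) - g'(v))` has degree `≤ 0`,
so `f'(u) = g'(v)` and by induction `f' = g' = a` is constant. Over a perfect field this makes
`f = aT + F^p` and `g = aT + G^p`, and with `b^p = a` the Frobenius gives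
`f(u) - g(v) = (bT + F(u) - G(v))^p` because `u - v = T^p`. A `p`-th power of degree `≤ 1` is
constant, so `F(u) - G(v)` has degree `≤ 1` while `deg F < deg f`; by induction `F` and `G` are
constant, and then `bT + F(u) - G(v)` can only be constant if `b = 0`.
-/

open Polynomial

namespace Polynomial

section Semiring

variable {R : Type*} [Semiring R]

theorem eq_of_comp_eq_comp_of_degree_le_zero {q s r t : R[X]} (hq : q.degree ≤ 0)
    (hs : s.degree ≤ 0) (h : q.comp r = s.comp t) : q = s := by
  obtain ⟨a, rfl⟩ := natDegree_eq_zero.1 (natDegree_eq_zero_iff_degree_le_zero.2 hq)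
  obtain ⟨b, rfl⟩ := natDegree_eq_zero.1 (natDegree_eq_zero_iff_degree_le_zero.2 hs)
  simpa only [C_comp] using h

theorem eq_zero_of_degree_C_mul_X_add_C_le_zero {b c : R} (h : (C b * X + C c).degree ≤ 0) :
    b = 0 := by
  simpa using coeff_eq_zero_of_degree_lt (n := 1) (h.trans_lt (by decide : (0 : WithBot ℕ) < 1))

end Semiring

theorem degree_le_one_of_degree_C_mul_X_add_le_one {R : Type*} [Ring R] {b : R} {Q : R[X]}
    (h : (C b * X + Q).degree ≤ 1) : Q.degree ≤ 1 := by
  rw [← add_sub_cancel_left (C b * X) Q]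
  exact (degree_sub_le _ _).trans (max_le h (degree_C_mul_X_le b))

section NoZeroDivisors

variable {R : Type*} [CommRing R] [NoZeroDivisors R]

theorem degree_le_zero_of_degree_pow_le_one {P : R[X]} {n : ℕ} (hn : 2 ≤ n)
    (h : (P ^ n).degree ≤ 1) : P.degree ≤ 0 := by
  rw [← natDegree_eq_zero_iff_degree_le_zero]
  have := natDegree_le_of_degree_le (n := 1) h
  rw [natDegree_pow] at this
  nlinarith

theorem degree_le_zero_of_degree_comp_le_one {q r : R[X]} (hr : 2 ≤ r.natDegree)
    (h : (q.comp r).degree ≤ 1) : q.degree ≤ 0 := by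
  rw [← natDegree_eq_zero_iff_degree_le_zero]
  have := natDegree_le_of_degree_le (n := 1) h
  rw [natDegree_comp] at this
  nlinarith

theorem natDegree_lt_natDegree_C_mul_X_add_pow {n : ℕ} (hn : 2 ≤ n) (c : R) (F : R[X])
    (h : (C c * X + F ^ n).natDegree ≠ 0) : F.natDegree < (C c * X + F ^ n).natDegree := by
  obtain hF | hF := Nat.eq_zero_or_pos F.natDegree
  · omega
  have hlt : (C c * X).natDegree < (F ^ n).natDegree := by
    rw [natDegree_pow]
    nlinarith [natDegree_le_of_degree_le (n := 1) (degree_C_mul_X_le c)]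
  rw [natDegree_add_eq_right_of_natDegree_lt hlt, natDegree_pow]
  nlinarith

theorem exists_eq_C_mul_X_add_pow (p : ℕ) [Fact p.Prime] [CharP R p] [PerfectRing R p]
    {f : R[X]} {a : R} (hf : derivative f = C a) : ∃ F : R[X], f = C a * X + F ^ p := by
  have hd : derivative (f - C a * X) = 0 := by simp [hf]
  refine ⟨((f - C a * X).contract p).map (frobeniusEquiv R p).symm, ?_⟩
  rw [← polynomial_expand_eq, expand_contract p hd (Fact.out : p.Prime).ne_zero]
  ring

end NoZeroDivisors

section Kollar

variable {k : Type*} [CommRing k] {p : ℕ}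

theorem degree_le_zero_of_degree_comp_sub_comp_le_one [IsDomain k] (hp : 2 < p) {f g : k[X]}
    (hf : f.degree ≤ 0)
    (h : (f.comp (X ^ p + X ^ (p - 1)) - g.comp (X ^ (p - 1))).degree ≤ 1) : g.degree ≤ 0 := by
  obtain ⟨c, rfl⟩ := natDegree_eq_zero.1 (natDegree_eq_zero_iff_degree_le_zero.2 hf)
  refine degree_le_zero_of_degree_comp_le_one (r := X ^ (p - 1))
    (by rw [natDegree_X_pow]; omega) ?_
  rw [← sub_sub_cancel (C c) (g.comp _), ← C_comp (p := X ^ p + X ^ (p - 1))]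
  exact (degree_sub_le _ _).trans (max_le (by simpa using degree_C_le.trans zero_le_one) h)

variable [CharP k p]

theorem derivative_X_pow_add_X_pow_sub_one :
    derivative (X ^ p + X ^ (p - 1) : k[X]) = derivative (X ^ (p - 1)) := by
  simp [derivative_X_pow]

theorem derivative_X_pow_sub_one (hp : p ≠ 0) :
    derivative (X ^ (p - 1) : k[X]) = -X ^ (p - 2) := by
  rw [derivative_X_pow, Nat.cast_sub (by omega), CharP.cast_eq_zero,
    show p - 1 - 1 = p - 2 by omega]
  simp

theorem comp_sub_comp_eq_pow [Fact p.Prime] (b : k) (F G : k[X]) :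
    (C (b ^ p) * X + F ^ p).comp (X ^ p + X ^ (p - 1)) -
        (C (b ^ p) * X + G ^ p).comp (X ^ (p - 1)) =
      (C b * X + (F.comp (X ^ p + X ^ (p - 1)) - G.comp (X ^ (p - 1)))) ^ p := by
  rw [add_pow_char, sub_pow_char, mul_pow, ← C_pow, ← pow_comp, ← pow_comp]
  simp only [add_comp, mul_comp, C_comp, X_comp]
  ring

theorem derivative_comp_eq_of_degree_comp_sub_comp_le_one [IsDomain k] (hp : 2 < p)
    {f g : k[X]} (h : (f.comp (X ^ p + X ^ (p - 1)) - g.comp (X ^ (p - 1))).degree ≤ 1) :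
    (derivative f).comp (X ^ p + X ^ (p - 1)) = (derivative g).comp (X ^ (p - 1)) := by
  have hD : derivative (f.comp (X ^ p + X ^ (p - 1)) - g.comp (X ^ (p - 1))) =
      -X ^ (p - 2) *
        ((derivative f).comp (X ^ p + X ^ (p - 1)) - (derivative g).comp (X ^ (p - 1))) := by
    rw [derivative_sub, derivative_comp, derivative_comp, derivative_X_pow_add_X_pow_sub_one,
      derivative_X_pow_sub_one (by omega)]
    ring
  have h0 := (natDegree_derivative_le _).trans
    (Nat.sub_le_sub_right (natDegree_le_of_degree_le (n := 1) h) 1)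
  rw [← sub_eq_zero]
  by_contra hQ
  rw [hD, natDegree_mul (by simp) hQ, natDegree_neg, natDegree_X_pow] at h0
  omega

end Kollar

end Polynomial

/-- Key inductive claim in the proof of Lemma 5.2: over a perfect field of
characteristic `p > 2`, if `f(T^p + T^(p-1)) - g(T^(p-1))` has degree at most `1`,
then `f` and `g` are constant. -/
theorem stmt_1 (p : ℕ) (hp : p.Prime) (hp2 : 2 < p)
    (k : Type*) [Field k] [CharP k p] [PerfectField k]
    (f g : k[X])
    (h : (f.comp (X ^ p + X ^ (p - 1)) - g.comp (X ^ (p - 1))).degree ≤ 1) :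
    f.degree ≤ 0 ∧ g.degree ≤ 0 := by
  have := Fact.mk hp
  induction hn : f.natDegree using Nat.strong_induction_on generalizing f g with
  | _ n ih =>
  obtain rfl | hn0 := Nat.eq_zero_or_pos n
  · have hf := natDegree_eq_zero_iff_degree_le_zero.1 hn
    exact ⟨hf, degree_le_zero_of_degree_comp_sub_comp_le_one hp2 hf h⟩
  have hD := derivative_comp_eq_of_degree_comp_sub_comp_le_one hp2 h
  obtain ⟨hf', hg'⟩ := ih _ (hn ▸ natDegree_derivative_lt (p := f) (by omega))
    (derivative f) (derivative g) (by rw [hD, sub_self, degree_zero]; exact bot_le) rfl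
  obtain ⟨a, hfa⟩ : ∃ a, derivative f = C a := ⟨_, eq_C_of_degree_le_zero hf'⟩
  have hga : derivative g = C a := (eq_of_comp_eq_comp_of_degree_le_zero hf' hg' hD).symm.trans hfa
  obtain ⟨b, rfl⟩ : ∃ b, b ^ p = a := ⟨_, frobeniusEquiv_symm_pow_p k p a⟩
  obtain ⟨F, rfl⟩ := exists_eq_C_mul_X_add_pow p hfa
  obtain ⟨G, rfl⟩ := exists_eq_C_mul_X_add_pow p hga
  rw [comp_sub_comp_eq_pow] at h
  have hP := degree_le_zero_of_degree_pow_le_one hp.two_le h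
  obtain ⟨hF, hG⟩ := ih _ (hn ▸ natDegree_lt_natDegree_C_mul_X_add_pow hp.two_le _ F (by omega))
    F G (degree_le_one_of_degree_C_mul_X_add_le_one (hP.trans zero_le_one)) rfl
  obtain ⟨c, rfl⟩ := natDegree_eq_zero.1 (natDegree_eq_zero_iff_degree_le_zero.2 hF)
  obtain ⟨d, rfl⟩ := natDegree_eq_zero.1 (natDegree_eq_zero_iff_degree_le_zero.2 hG)
  obtain rfl := eq_zero_of_degree_C_mul_X_add_C_le_zero (by rwa [C_comp, C_comp, ← C_sub] at hP)
  simp only [zero_pow hp.ne_zero, map_zero, zero_mul, zero_add, ← C_pow]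
  exact ⟨degree_C_le, degree_C_le⟩
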